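/- In the setting of eq. (9eq) — Y a real Hilbert space, h : Y → ℝ with gradient ∇h and Hessian field H (each H(y) self-adjoint with μ‖v‖² ≤ ⟨H(y)v,v⟩ ≤ L_{g,1}‖v‖², 0 < μ ≤ L_{g,1}, ‖H(y)−H(y')‖_op ≤ L_{g,2}‖y−y'‖), ∇h(y*) = 0, 0 < γ ≤ 1/L_{g,1}, v₀ := γ∇h(y), v_{t+1} := v_t − γ(H(y)(v_t) − ∇h(y)) — suppose additionally that T satisfies (1 − μγ)^T √(1 − μγ) ≤ 1/4, and let y*' ∈ Y and s ≥ 0 satisfy ‖y* − y*'‖ ≤ (L_{g,1}/μ) s. Then, with y⁺ := y − v_T: ‖y⁺ − y*'‖ ≤ (L_{g,2}/(2μ))‖y − y*‖² + (L_{g,1}/μ) s + (1/4)‖y − y*‖. -/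

import Mathlib

open scoped RealInnerProductSpace

/-! With `P = 1 - γ H(y)` and `w = H(y) (y - y*) - ∇h(y)`, the error `e_t = y - v_t - y*` of the
inner loop obeys the affine recursion `e_{t+1} = P e_t + γ w`, started from `e_{-1} = y - y*`.
As `H(y)` is self-adjoint with quadratic form between `μ` and `L_{g,1}`, `‖P‖ ≤ 1 - μγ`, so
`‖e_T‖ ≤ (1 - μγ)^{T+1} ‖y - y*‖ + γ‖w‖ / (μγ)`. The choice of `T` makes the first factor at
most `1/4`, and since `∇h(y*) = 0`, Taylor's formula with a Lipschitz Hessian gives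
`‖w‖ ≤ (L_{g,2}/2) ‖y - y*‖²`. The triangle inequality through `y*` finishes the proof. -/

theorem norm_sub_sub_fderiv_le_of_lipschitz {E F : Type*} [NormedAddCommGroup E]
    [NormedSpace ℝ E] [NormedAddCommGroup F] [NormedSpace ℝ F] {f : E → F}
    {f' : E → E →L[ℝ] F} {L : ℝ} (hf : ∀ x, HasFDerivAt f (f' x) x)
    (hf' : ∀ x y, ‖f' x - f' y‖ ≤ L * ‖x - y‖) (a b : E) :
    ‖f b - f a - f' a (b - a)‖ ≤ L / 2 * ‖b - a‖ ^ 2 := by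
  set d := b - a
  let φ : ℝ → F := fun t => f (a + t • d) - f a - t • f' a d
  have hφ (t : ℝ) : HasDerivAt φ (f' (a + t • d) d - f' a d) t := by
    have hline : HasDerivAt (fun t : ℝ => a + t • d) d t := by
      simpa using ((hasDerivAt_id t).smul_const d).const_add a
    have hlin : HasDerivAt (fun t : ℝ => t • f' a d) (f' a d) t := by
      simpa using (hasDerivAt_id t).smul_const (f' a d)
    exact (((hf _).comp_hasDerivAt t hline).sub_const (f a)).sub hlin
  have hB (t : ℝ) : HasDerivAt (fun t : ℝ => L / 2 * ‖d‖ ^ 2 * t ^ 2) (L * ‖d‖ ^ 2 * t) t := by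
    refine ((hasDerivAt_pow 2 t).const_mul (L / 2 * ‖d‖ ^ 2)).congr_deriv ?_
    ring
  have hφ' : ∀ t ∈ Set.Ico (0 : ℝ) 1, ‖f' (a + t • d) d - f' a d‖ ≤ L * ‖d‖ ^ 2 * t := by
    intro t ht
    calc ‖f' (a + t • d) d - f' a d‖ = ‖(f' (a + t • d) - f' a) d‖ := rfl
      _ ≤ L * ‖a + t • d - a‖ * ‖d‖ :=
        ((f' _ - f' a).le_opNorm d).trans (by gcongr; exact hf' _ _)
      _ = L * ‖d‖ ^ 2 * t := by
        rw [add_sub_cancel_left, norm_smul, Real.norm_of_nonneg ht.1]; ring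
  have key := image_norm_le_of_norm_deriv_right_le_deriv_boundary
    (fun t _ => (hφ t).continuousAt.continuousWithinAt)
    (fun t _ => (hφ t).hasDerivWithinAt) (by simp [φ]) hB hφ' (Set.right_mem_Icc.2 zero_le_one)
  simpa only [φ, d, one_smul, one_pow, mul_one, add_sub_cancel] using key

theorem ContinuousLinearMap.opNorm_le_of_abs_inner_le {E : Type*} [NormedAddCommGroup E]
    [InnerProductSpace ℝ E] {T : E →L[ℝ] E} (hT : (T : E →ₗ[ℝ] E).IsSymmetric) {c : ℝ}
    (hc : 0 ≤ c) (h : ∀ x, |⟪T x, x⟫| ≤ c * ‖x‖ ^ 2) : ‖T‖ ≤ c := by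
  rw [T.norm_eq_iSup_rayleighQuotient hT]
  refine ciSup_le fun x => ?_
  rcases eq_or_ne x 0 with rfl | hx
  · simpa using hc
  rw [rayleighQuotient, reApplyInnerSelf_apply, RCLike.re_to_real, abs_div, abs_sq,
    div_le_iff₀ (by positivity)]
  exact h x

theorem norm_one_sub_smul_le {E : Type*} [NormedAddCommGroup E] [InnerProductSpace ℝ E]
    {H : E →L[ℝ] E} (hH : (H : E →ₗ[ℝ] E).IsSymmetric) {μ L γ : ℝ}
    (hlb : ∀ v, μ * ‖v‖ ^ 2 ≤ ⟪H v, v⟫) (hub : ∀ v, ⟪H v, v⟫ ≤ L * ‖v‖ ^ 2) (hμL : μ ≤ L)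
    (hγ : 0 ≤ γ) (hγL : γ * L ≤ 1) : ‖1 - γ • H‖ ≤ 1 - μ * γ := by
  have hform (v : E) : ⟪(1 - γ • H) v, v⟫ = ‖v‖ ^ 2 - γ * ⟪H v, v⟫ := by
    simp [inner_sub_left, real_inner_smul_left]
  refine ContinuousLinearMap.opNorm_le_of_abs_inner_le (fun v w => ?_) (by nlinarith) fun v => ?_
  · have hHvw : ⟪H v, w⟫ = ⟪v, H w⟫ := hH v w
    show ⟪(1 - γ • H) v, w⟫ = ⟪v, (1 - γ • H) w⟫
    simp only [sub_apply, smul_apply, one_apply_eq_self, inner_sub_left, inner_sub_right,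
      real_inner_smul_left, real_inner_smul_right, hHvw]
  · rw [hform, abs_le]
    have := hlb v
    have := hub v
    constructor <;> nlinarith [sq_nonneg ‖v‖]

theorem norm_le_of_affine_recursion {𝕜 E : Type*} [NontriviallyNormedField 𝕜]
    [SeminormedAddCommGroup E] [NormedSpace 𝕜 E] {P : E →L[𝕜] E} {r : ℝ} (hP : ‖P‖ ≤ r)
    (hr : r < 1) {e : ℕ → E} {d c : E}
    (he0 : e 0 = P d + c) (he : ∀ t, e (t + 1) = P (e t) + c) (t : ℕ) :
    ‖e t‖ ≤ r ^ (t + 1) * ‖d‖ + ‖c‖ / (1 - r) := by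
  have hr0 : 0 ≤ r := (norm_nonneg P).trans hP
  have hPr (x : E) : ‖P x‖ ≤ r * ‖x‖ := P.le_of_opNorm_le hP x
  induction t with
  | zero =>
    calc ‖e 0‖ ≤ r * ‖d‖ + ‖c‖ := he0 ▸ (norm_add_le _ _).trans (by gcongr; exact hPr d)
      _ ≤ _ := by
        rw [zero_add, pow_one]
        gcongr
        exact le_div_self (norm_nonneg c) (by linarith) (by linarith)
  | succ t ih =>
    calc ‖e (t + 1)‖ ≤ r * ‖e t‖ + ‖c‖ := he t ▸ (norm_add_le _ _).trans (by gcongr; exact hPr _)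
      _ ≤ r * (r ^ (t + 1) * ‖d‖ + ‖c‖ / (1 - r)) + ‖c‖ := by gcongr
      _ = r ^ (t + 1 + 1) * ‖d‖ + ‖c‖ / (1 - r) := by
        field_simp [(sub_pos.2 hr).ne']; ring

theorem pow_succ_le_pow_mul_sqrt {r : ℝ} (hr0 : 0 ≤ r) (hr1 : r ≤ 1) (n : ℕ) :
    r ^ (n + 1) ≤ r ^ n * Real.sqrt r := by
  rw [pow_succ]
  gcongr
  exact (Real.le_sqrt hr0 hr0).2 (by nlinarith)

theorem stmt_9_general
    {Y : Type*} [NormedAddCommGroup Y] [InnerProductSpace ℝ Y]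
    (gradh : Y → Y) (Hf : Y → Y →L[ℝ] Y)
    (μ Lg1 Lg2 γ : ℝ) (hμ : 0 < μ) (hμL : μ ≤ Lg1)
    (hHess : ∀ y : Y, HasFDerivAt gradh (Hf y) y)
    (hsym : ∀ y v w : Y, ⟪Hf y v, w⟫ = ⟪v, Hf y w⟫)
    (hlb : ∀ y v : Y, μ * ‖v‖ ^ 2 ≤ ⟪Hf y v, v⟫)
    (hub : ∀ y v : Y, ⟪Hf y v, v⟫ ≤ Lg1 * ‖v‖ ^ 2)
    (hLip : ∀ y y' : Y, ‖Hf y - Hf y'‖ ≤ Lg2 * ‖y - y'‖)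
    (ystar : Y) (hstar : gradh ystar = 0)
    (y : Y) (hγ : 0 < γ) (hγle : γ ≤ 1 / Lg1)
    (v : ℕ → Y)
    (hv0 : v 0 = γ • gradh y)
    (hvrec : ∀ t : ℕ, v (t + 1) = v t - γ • (Hf y (v t) - gradh y))
    (T : ℕ) (hT : (1 - μ * γ) ^ T * Real.sqrt (1 - μ * γ) ≤ 1 / 4)
    (ystar' : Y) (s : ℝ)
    (hclose : ‖ystar - ystar'‖ ≤ Lg1 / μ * s) :
    ‖(y - v T) - ystar'‖
      ≤ Lg2 / (2 * μ) * ‖y - ystar‖ ^ 2 + Lg1 / μ * s + 1 / 4 * ‖y - ystar‖ := by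
  set d := y - ystar
  set r := 1 - μ * γ
  set P := 1 - γ • Hf y
  set w := Hf y d - gradh y
  have hγL : γ * Lg1 ≤ 1 := (le_div_iff₀ (hμ.trans_le hμL)).1 hγle
  have hP : ‖P‖ ≤ r := norm_one_sub_smul_le (hsym y) (hlb y) (hub y) hμL hγ.le hγL
  have hr0 : 0 ≤ r := (norm_nonneg P).trans hP
  have hr1 : r < 1 := by linarith [mul_pos hμ hγ]
  have hw : ‖w‖ ≤ Lg2 / 2 * ‖d‖ ^ 2 := by
    have htaylor := norm_sub_sub_fderiv_le_of_lipschitz hHess hLip y ystar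
    rwa [hstar, norm_sub_rev ystar, show (0 : Y) - gradh y - Hf y (ystar - y) = w by
      simp only [w, d, map_sub]; abel] at htaylor
  have he0 : y - v 0 - ystar = P d + γ • w := by
    simp only [hv0, P, w, d, sub_apply, smul_apply, one_apply_eq_self]
    module
  have hstep (t : ℕ) : y - v (t + 1) - ystar = P (y - v t - ystar) + γ • w := by
    simp only [hvrec, P, w, d, sub_apply, smul_apply, one_apply_eq_self, map_sub]
    module
  have herr := norm_le_of_affine_recursion (e := fun t => y - v t - ystar) hP hr1 he0 hstep T
  have hpow : r ^ (T + 1) ≤ 1 / 4 := (pow_succ_le_pow_mul_sqrt hr0 hr1.le T).trans hT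
  have hnewton : ‖γ • w‖ / (1 - r) ≤ Lg2 / (2 * μ) * ‖d‖ ^ 2 := by
    rw [norm_smul, Real.norm_of_nonneg hγ.le, show 1 - r = γ * μ by ring,
      mul_div_mul_left _ _ hγ.ne']
    exact (div_le_div_of_nonneg_right hw hμ.le).trans_eq (by ring)
  calc ‖y - v T - ystar'‖ = ‖(y - v T - ystar) + (ystar - ystar')‖ := by congr 1; abel
    _ ≤ ‖y - v T - ystar‖ + ‖ystar - ystar'‖ := norm_add_le _ _
    _ ≤ (1 / 4 * ‖d‖ + Lg2 / (2 * μ) * ‖d‖ ^ 2) + Lg1 / μ * s := by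
      gcongr
      exact herr.trans (add_le_add (by gcongr) hnewton)
    _ = _ := by ring

/-- First inequality (eq. y-descent1-f) of Lemma C.2 of the paper: after `T + 1` inner
gradient-descent steps with `(1−μγ)^T √(1−μγ) ≤ 1/4`, the new lower-level iterate
`y⁺ = y − v_T` satisfies a quarter-contraction toward `y*` plus a quadratic Newton
remainder and a step-length term. -/
theorem stmt_9
    {Y : Type*} [NormedAddCommGroup Y] [InnerProductSpace ℝ Y] [CompleteSpace Y]
    (h : Y → ℝ) (gradh : Y → Y) (Hf : Y → Y →L[ℝ] Y)
    (μ Lg1 Lg2 γ : ℝ) (hμ : 0 < μ) (hμL : μ ≤ Lg1)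
    (hgrad : ∀ y : Y, HasGradientAt h (gradh y) y)
    (hHess : ∀ y : Y, HasFDerivAt gradh (Hf y) y)
    (hsym : ∀ y v w : Y, ⟪Hf y v, w⟫ = ⟪v, Hf y w⟫)
    (hlb : ∀ y v : Y, μ * ‖v‖ ^ 2 ≤ ⟪Hf y v, v⟫)
    (hub : ∀ y v : Y, ⟪Hf y v, v⟫ ≤ Lg1 * ‖v‖ ^ 2)
    (hLip : ∀ y y' : Y, ‖Hf y - Hf y'‖ ≤ Lg2 * ‖y - y'‖)
    (ystar : Y) (hstar : gradh ystar = 0)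
    (y : Y) (hγ : 0 < γ) (hγle : γ ≤ 1 / Lg1)
    (v : ℕ → Y)
    (hv0 : v 0 = γ • gradh y)
    (hvrec : ∀ t : ℕ, v (t + 1) = v t - γ • (Hf y (v t) - gradh y))
    (T : ℕ) (hT : (1 - μ * γ) ^ T * Real.sqrt (1 - μ * γ) ≤ 1 / 4)
    (ystar' : Y) (s : ℝ) (hs : 0 ≤ s)
    (hclose : ‖ystar - ystar'‖ ≤ Lg1 / μ * s) :
    ‖(y - v T) - ystar'‖
      ≤ Lg2 / (2 * μ) * ‖y - ystar‖ ^ 2 + Lg1 / μ * s + 1 / 4 * ‖y - ystar‖ :=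
  stmt_9_general gradh Hf μ Lg1 Lg2 γ hμ hμL hHess hsym hlb hub hLip ystar hstar y hγ hγle v hv0
    hvrec T hT ystar' s hclose
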